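/- Let (M, g_E) be a closed Einstein manifold with constant scalar curvature scal = −n (Einstein constant −1). Among all w ∈ C^∞(M), w > 0, with ∫_M w² dV = 1, the constant function w ≡ vol(M,g_E)^{−1/2} minimizes W̃(w) = ∫_M (2|∇w|² + (1/2) scal w² + w² log w²) dV, and the minimum value is −n/2 − log(vol(M,g_E)). -/

import Mathlib

open MeasureTheory

lemma tangent_log (t c : ℝ) (ht : 0 < t) (hc : 0 < c) :
    t * (1 + Real.log c) - c ≤ t * Real.log t := by
  have h := Real.log_le_sub_one_of_pos (show (0:ℝ) < c / t from div_pos hc ht)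
  rw [Real.log_div hc.ne' ht.ne'] at h
  have h2 : t * (Real.log c - Real.log t) ≤ t * (c / t - 1) :=
    mul_le_mul_of_nonneg_left h ht.le
  have h3 : t * (c / t - 1) = c - t := by field_simp
  rw [h3] at h2
  nlinarith

/-- Let `(M, g_E)` be a closed Einstein manifold with constant scalar curvature
`scal ≡ −n` (Einstein constant `−1`). Among all `w ∈ C^∞(M)`, `w > 0`, with
`∫_M w² dV = 1`, the constant function `w ≡ vol(M,g_E)^{-1/2}` minimizes
`W̃(w) = ∫_M (2|∇w|² + (1/2) scal w² + w² log w²) dV`, and the minimum value is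
`−n/2 − log(vol(M,g_E))`.

The manifold is modelled by its finite volume measure `vol` and the pointwise squared
gradient norm `gradsq`, with `gradsq` vanishing on constants and nonnegative. -/
theorem constant_minimizes_Wtilde
    {M : Type*} [MeasurableSpace M] [Nonempty M]
    (vol : Measure M) [IsFiniteMeasure vol]
    (hvol : 0 < (vol Set.univ).toReal)
    (gradsq : (M → ℝ) → M → ℝ)
    (gradsq_nonneg : ∀ (w : M → ℝ) (x : M), 0 ≤ gradsq w x)
    (gradsq_const : ∀ c : ℝ, gradsq (fun _ => c) = fun _ => 0)
    (n : ℕ) (hn : 1 ≤ n)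
    (scal : M → ℝ) (hscal : ∀ x, scal x = -(n : ℝ)) :
    (∀ w : M → ℝ, (∀ x, 0 < w x) →
      Integrable (fun x => (w x) ^ 2) vol →
      (∫ x, (w x) ^ 2 ∂vol = 1) →
      Integrable (fun x => gradsq w x) vol →
      Integrable (fun x => (w x) ^ 2 * Real.log ((w x) ^ 2)) vol →
      -(n : ℝ)/2 - Real.log ((vol Set.univ).toReal)
        ≤ ∫ x, (2 * gradsq w x + (1/2) * scal x * (w x) ^ 2
            + (w x) ^ 2 * Real.log ((w x) ^ 2)) ∂vol)
    ∧ (∫ x, (2 * gradsq (fun _ => (Real.sqrt ((vol Set.univ).toReal))⁻¹) x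
          + (1/2) * scal x * ((Real.sqrt ((vol Set.univ).toReal))⁻¹) ^ 2
          + ((Real.sqrt ((vol Set.univ).toReal))⁻¹) ^ 2
              * Real.log (((Real.sqrt ((vol Set.univ).toReal))⁻¹) ^ 2)) ∂vol
        = -(n : ℝ)/2 - Real.log ((vol Set.univ).toReal)) := by
  set V : ℝ := (vol Set.univ).toReal with hV
  have hVpos : 0 < V := hvol
  constructor
  · intro w hw hw2 hnorm hgrad hlog
    have hVinv : (0:ℝ) < 1 / V := by positivity
    -- lower bound function
    set a : ℝ := -(n : ℝ)/2 + 1 + Real.log (1 / V) with ha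
    have hglower : Integrable (fun x => a * (w x) ^ 2 - 1 / V) vol :=
      (hw2.const_mul a).sub (integrable_const _)
    have hF : Integrable (fun x => 2 * gradsq w x + (1/2) * scal x * (w x) ^ 2
        + (w x) ^ 2 * Real.log ((w x) ^ 2)) vol := by
      have h1 : Integrable (fun x => (1/2) * scal x * (w x) ^ 2) vol := by
        have : (fun x => (1/2) * scal x * (w x) ^ 2)
            = fun x => (-(n:ℝ)/2) * (w x) ^ 2 := by
          funext x; rw [hscal x]; ring
        rw [this]; exact hw2.const_mul _
      exact ((hgrad.const_mul 2).add h1).add hlog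
    have hptw : ∀ x, a * (w x) ^ 2 - 1 / V
        ≤ 2 * gradsq w x + (1/2) * scal x * (w x) ^ 2 + (w x) ^ 2 * Real.log ((w x) ^ 2) := by
      intro x
      have ht : 0 < (w x) ^ 2 := pow_pos (hw x) 2
      have htan := tangent_log ((w x) ^ 2) (1 / V) ht hVinv
      have hg := gradsq_nonneg w x
      rw [hscal x]
      nlinarith
    have hmono := integral_mono hglower hF hptw
    have hcalc : ∫ x, (a * (w x) ^ 2 - 1 / V) ∂vol
        = -(n : ℝ)/2 - Real.log V := by
      rw [integral_sub (hw2.const_mul a) (integrable_const _),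
        integral_const_mul, hnorm, integral_const, smul_eq_mul, measureReal_def, ← hV]
      rw [ha, Real.log_div one_ne_zero hVpos.ne', Real.log_one]
      field_simp
      ring
    linarith [hmono, le_of_eq hcalc.symm]
  · have hsq : ((Real.sqrt V)⁻¹ : ℝ) ^ 2 = 1 / V := by
      rw [inv_pow, Real.sq_sqrt hVpos.le, one_div]
    have hconst : (fun x : M => 2 * gradsq (fun _ => (Real.sqrt V)⁻¹) x
          + (1/2) * scal x * ((Real.sqrt V)⁻¹) ^ 2
          + ((Real.sqrt V)⁻¹) ^ 2 * Real.log (((Real.sqrt V)⁻¹) ^ 2))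
        = fun _ : M => (-(n:ℝ)/2) * (1 / V) + (1 / V) * Real.log (1 / V) := by
      funext x
      rw [gradsq_const, hscal x, hsq]
      ring
    rw [hconst, integral_const, smul_eq_mul, measureReal_def, ← hV]
    rw [Real.log_div one_ne_zero hVpos.ne', Real.log_one]
    field_simp
    ring
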